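/- (Hardness transfer from detectors to classifiers.) Let E be a real normed vector space, C a positive natural number, ε ≥ 0, μ a measure on E × Fin C, and β ∈ ℝ≥0∞. Suppose that every detector g : E → Option (Fin C) has robust risk with detection at distance ε at least β, i.e. μ {(x, y) | g x ≠ some y ∨ ∃ x̂, dist x x̂ ≤ ε ∧ g x̂ ≠ some y ∧ g x̂ ≠ none} ≥ β. Then every classifier f : E → Fin C has robust risk at distance ε/2 at least β, i.e. μ {(x, y) | ∃ x̂, dist x x̂ ≤ ε/2 ∧ f x̂ ≠ y} ≥ β. -/

import Mathlib

/-!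
A classifier `f` yields a detector that rejects `x` as soon as `f` takes a label other than
`f x` within `ε / 2` of `x`, and answers `f x` otherwise. If it errs on a clean point `x`,
either `f x` is wrong or `x` was rejected, so `f` errs within `ε / 2` of `x`. If it is fooled
at `x` by an accepted `x̂` with `dist x x̂ ≤ ε`, then the midpoint of `x` and `x̂` is within
`ε / 2` of both, so `f` gives it the wrong label `f x̂`. Either way the pair is in the
classifier's error set at radius `ε / 2`, and monotonicity of `μ` concludes.
-/

open MeasureTheory

section PseudoMetric

variable {X ι : Type*} [PseudoMetricSpace X]

/-- `μ (robustErrorSet f ε)` is the robust risk `R_adv^ε(f)`. -/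
def robustErrorSet (f : X → ι) (ε : ℝ) : Set (X × ι) :=
  {p | ∃ xhat, dist p.1 xhat ≤ ε ∧ f xhat ≠ p.2}

/-- `μ (detectionErrorSet g ε)` is the robust risk with detection `R_adv-det^ε(g)`. -/
def detectionErrorSet (g : X → Option ι) (ε : ℝ) : Set (X × ι) :=
  {p | g p.1 ≠ some p.2 ∨ ∃ xhat, dist p.1 xhat ≤ ε ∧ g xhat ≠ some p.2 ∧ g xhat ≠ none}

open Classical in
noncomputable def detectorOfClassifier (f : X → ι) (δ : ℝ) (x : X) : Option ι :=
  if ∃ z, dist x z ≤ δ ∧ f z ≠ f x then none else some (f x)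

variable {f : X → ι} {δ : ℝ} {x : X} {y : ι}

theorem detectorOfClassifier_ne_none_iff :
    detectorOfClassifier f δ x ≠ none ↔ ∀ z, dist x z ≤ δ → f z = f x := by
  unfold detectorOfClassifier
  split_ifs with h
  · simpa using h
  · push Not at h
    simpa using h

theorem detectorOfClassifier_eq_some_of_ne_none (h : detectorOfClassifier f δ x ≠ none) :
    detectorOfClassifier f δ x = some (f x) := by
  unfold detectorOfClassifier at *
  split_ifs at * <;> trivial

theorem mem_robustErrorSet_of_detectorOfClassifier_ne (hδ : 0 ≤ δ)
    (h : detectorOfClassifier f δ x ≠ some y) : (x, y) ∈ robustErrorSet f δ := by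
  by_cases hfx : f x = y
  · have hnone : ¬ detectorOfClassifier f δ x ≠ none := fun hnn =>
      h (hfx ▸ detectorOfClassifier_eq_some_of_ne_none hnn)
    rw [detectorOfClassifier_ne_none_iff] at hnone
    push Not at hnone
    obtain ⟨z, hz, hfz⟩ := hnone
    exact ⟨z, hz, hfx ▸ hfz⟩
  · exact ⟨x, by rwa [dist_self], hfx⟩

end PseudoMetric

section Normed

variable {X ι : Type*} [SeminormedAddCommGroup X] [NormedSpace ℝ X] {f : X → ι} {ε : ℝ}

theorem dist_left_midpoint_le_half {x x' : X} (h : dist x x' ≤ ε) :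
    dist x (midpoint ℝ x x') ≤ ε / 2 := by
  rw [dist_left_midpoint, Real.norm_two]
  linarith

theorem mem_robustErrorSet_of_detectorOfClassifier_fooled {x xhat : X} {y : ι}
    (hd : dist x xhat ≤ ε) (hwrong : detectorOfClassifier f (ε / 2) xhat ≠ some y)
    (haccept : detectorOfClassifier f (ε / 2) xhat ≠ none) :
    (x, y) ∈ robustErrorSet f (ε / 2) := by
  have hconst := detectorOfClassifier_ne_none_iff.mp haccept
  have hfxhat : f xhat ≠ y := fun h =>
    hwrong (h ▸ detectorOfClassifier_eq_some_of_ne_none haccept)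
  have hmid : f (midpoint ℝ x xhat) = f xhat := by
    refine hconst _ ?_
    rw [midpoint_comm]
    exact dist_left_midpoint_le_half (dist_comm x xhat ▸ hd)
  exact ⟨midpoint ℝ x xhat, dist_left_midpoint_le_half hd, hmid ▸ hfxhat⟩

theorem detectionErrorSet_detectorOfClassifier_subset (f : X → ι) (hε : 0 ≤ ε) :
    detectionErrorSet (detectorOfClassifier f (ε / 2)) ε ⊆ robustErrorSet f (ε / 2) := by
  rintro ⟨x, y⟩ (hclean | ⟨xhat, hd, hwrong, haccept⟩)
  · exact mem_robustErrorSet_of_detectorOfClassifier_ne (by positivity) hclean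
  · exact mem_robustErrorSet_of_detectorOfClassifier_fooled hd hwrong haccept

end Normed

theorem hardness_transfer_detector_to_classifier_general
    {E : Type*} [NormedAddCommGroup E] [NormedSpace ℝ E] [MeasurableSpace E]
    (C : ℕ) (ε : ℝ) (hε : 0 ≤ ε)
    (μ : MeasureTheory.Measure (E × Fin C)) (β : ENNReal)
    (hdet : ∀ g : E → Option (Fin C),
      β ≤ μ {p : E × Fin C | g p.1 ≠ some p.2 ∨
        ∃ xhat, dist p.1 xhat ≤ ε ∧ g xhat ≠ some p.2 ∧ g xhat ≠ none}) :
    ∀ f : E → Fin C,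
      β ≤ μ {p : E × Fin C | ∃ xhat, dist p.1 xhat ≤ ε / 2 ∧ f xhat ≠ p.2} := fun f =>
  (hdet (detectorOfClassifier f (ε / 2))).trans
    (measure_mono (detectionErrorSet_detectorOfClassifier_subset f hε))

theorem hardness_transfer_detector_to_classifier
    {E : Type*} [NormedAddCommGroup E] [NormedSpace ℝ E] [MeasurableSpace E]
    (C : ℕ) (hC : 0 < C) (ε : ℝ) (hε : 0 ≤ ε)
    (μ : MeasureTheory.Measure (E × Fin C)) (β : ENNReal)
    (hdet : ∀ g : E → Option (Fin C),
      β ≤ μ {p : E × Fin C | g p.1 ≠ some p.2 ∨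
        ∃ xhat, dist p.1 xhat ≤ ε ∧ g xhat ≠ some p.2 ∧ g xhat ≠ none}) :
    ∀ f : E → Fin C,
      β ≤ μ {p : E × Fin C | ∃ xhat, dist p.1 xhat ≤ ε / 2 ∧ f xhat ≠ p.2} :=
  hardness_transfer_detector_to_classifier_general C ε hε μ β hdet
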